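/- If λ₁ < 0 and λ₂ < 0 (both players spiteful) and the material payoffs satisfy m₁₁ − c₁ < m₂₁ and n₁₁ − c₂ < n₁₂ with n₁₂, m₂₁ ≥ 0 and c₁, c₂ > 0, then nF is a strictly dominant strategy for both players, so (nF,nF) is the unique Nash equilibrium of the psychological forwarding game. -/

import Mathlib

/-! The gain of player 1 from switching `F → nF` is his own material gain plus `-λ₁` times the
material loss his switch inflicts on player 2, and for a spiteful player (`λ₁ ≤ 0`) with
nonnegative benefits `n₁₁, n₁₂` both terms push towards `nF`; symmetrically for player 2. A
profile of strictly dominant strategies is the unique pure Nash equilibrium of any game. -/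

inductive FAct | F | nF
deriving DecidableEq

open FAct

/-- Material payoff of player 1 in the forwarding game. -/
def r1 (m11 m21 c1 : ℝ) : FAct → FAct → ℝ
  | F, F => m11 - c1
  | F, nF => -c1
  | nF, F => m21
  | nF, nF => 0

/-- Material payoff of player 2 in the forwarding game. -/
def r2 (n11 n12 c2 : ℝ) : FAct → FAct → ℝ
  | F, F => n11 - c2
  | F, nF => n12
  | nF, F => -c2
  | nF, nF => 0

/-- Empathic payoff of player 1: own material payoff plus `λ₁` times the other's. -/
def v1 (m11 m21 n11 n12 c1 c2 lam1 : ℝ) (a b : FAct) : ℝ :=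
  r1 m11 m21 c1 a b + lam1 * r2 n11 n12 c2 a b

/-- Empathic payoff of player 2: own material payoff plus `λ₂` times the other's. -/
def v2 (m11 m21 n11 n12 c1 c2 lam2 : ℝ) (a b : FAct) : ℝ :=
  r2 n11 n12 c2 a b + lam2 * r1 m11 m21 c1 a b

/-- Pure Nash equilibrium of the psychological forwarding game. -/
def isNash (m11 m21 n11 n12 c1 c2 lam1 lam2 : ℝ) (a b : FAct) : Prop :=
  (∀ a' : FAct, v1 m11 m21 n11 n12 c1 c2 lam1 a' b ≤ v1 m11 m21 n11 n12 c1 c2 lam1 a b) ∧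
  (∀ b' : FAct, v2 m11 m21 n11 n12 c1 c2 lam2 a b' ≤ v2 m11 m21 n11 n12 c1 c2 lam2 a b)

section Dominance

variable {α β γ : Type*} [Preorder γ]

def IsPureNash (u₁ u₂ : α → β → γ) (a : α) (b : β) : Prop :=
  (∀ a', u₁ a' b ≤ u₁ a b) ∧ (∀ b', u₂ a b' ≤ u₂ a b)

/-- Player 2's dominance is stated for the game `flip u₂` seen from his side. -/
def IsStrictlyDominant (u : α → β → γ) (a₀ : α) : Prop :=
  ∀ a ≠ a₀, ∀ b, u a b < u a₀ b

theorem isPureNash_iff_of_isStrictlyDominant {u₁ u₂ : α → β → γ} {a₀ : α} {b₀ : β}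
    (h₁ : IsStrictlyDominant u₁ a₀) (h₂ : IsStrictlyDominant (flip u₂) b₀) (a : α) (b : β) :
    IsPureNash u₁ u₂ a b ↔ a = a₀ ∧ b = b₀ := by
  constructor
  · rintro ⟨hbest₁, hbest₂⟩
    constructor
    · by_contra ha
      exact (h₁ a ha b).not_ge (hbest₁ a₀)
    · by_contra hb
      exact (h₂ b hb a).not_ge (hbest₂ b₀)
  · rintro ⟨rfl, rfl⟩
    refine ⟨fun a' => ?_, fun b' => ?_⟩
    · by_cases ha : a' = a
      · rw [ha]
      · exact (h₁ a' ha b).le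
    · by_cases hb : b' = b
      · rw [hb]
      · exact (h₂ b' hb a).le

theorem isStrictlyDominant_nF {u : FAct → β → γ} (h : ∀ b, u F b < u nF b) :
    IsStrictlyDominant u nF := by
  rintro (_ | _) ha b
  · exact h b
  · exact absurd rfl ha

end Dominance

theorem v1_F_lt_v1_nF {m11 m21 n11 n12 c1 c2 lam1 : ℝ} (hn11 : 0 ≤ n11) (hn12 : 0 ≤ n12)
    (hc1 : 0 < c1) (hl1 : lam1 ≤ 0) (h1 : m11 - c1 < m21) (b : FAct) :
    v1 m11 m21 n11 n12 c1 c2 lam1 F b < v1 m11 m21 n11 n12 c1 c2 lam1 nF b := by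
  cases b <;> simp only [v1, r1, r2]
  · linear_combination h1 + mul_nonpos_of_nonpos_of_nonneg hl1 hn11
  · linear_combination hc1 + mul_nonpos_of_nonpos_of_nonneg hl1 hn12

theorem v2_F_lt_v2_nF {m11 m21 n11 n12 c1 c2 lam2 : ℝ} (hm11 : 0 ≤ m11) (hm21 : 0 ≤ m21)
    (hc2 : 0 < c2) (hl2 : lam2 ≤ 0) (h2 : n11 - c2 < n12) (a : FAct) :
    v2 m11 m21 n11 n12 c1 c2 lam2 a F < v2 m11 m21 n11 n12 c1 c2 lam2 a nF := by
  cases a <;> simp only [v2, r1, r2]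
  · linear_combination h2 + mul_nonpos_of_nonpos_of_nonneg hl2 hm11
  · linear_combination hc2 + mul_nonpos_of_nonpos_of_nonneg hl2 hm21

theorem nFnF_unique_nash_of_spite (m11 m21 n11 n12 c1 c2 lam1 lam2 : ℝ)
    (hm11 : 0 ≤ m11) (hn11 : 0 ≤ n11) (hm21 : 0 ≤ m21) (hn12 : 0 ≤ n12)
    (hc1 : 0 < c1) (hc2 : 0 < c2)
    (hl1 : lam1 < 0) (hl2 : lam2 < 0)
    (h1 : m11 - c1 < m21) (h2 : n11 - c2 < n12) :
    -- nF is a strictly dominant strategy for both players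
    ((∀ b : FAct, v1 m11 m21 n11 n12 c1 c2 lam1 F b < v1 m11 m21 n11 n12 c1 c2 lam1 nF b) ∧
     (∀ a : FAct, v2 m11 m21 n11 n12 c1 c2 lam2 a F < v2 m11 m21 n11 n12 c1 c2 lam2 a nF)) ∧
    -- hence (nF,nF) is the unique pure Nash equilibrium
    isNash m11 m21 n11 n12 c1 c2 lam1 lam2 nF nF ∧
    (∀ a b : FAct, isNash m11 m21 n11 n12 c1 c2 lam1 lam2 a b → a = nF ∧ b = nF) := by
  have hd1 := v1_F_lt_v1_nF (m11 := m11) (c2 := c2) hn11 hn12 hc1 hl1.le h1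
  have hd2 := v2_F_lt_v2_nF (n11 := n11) (c1 := c1) hm11 hm21 hc2 hl2.le h2
  have hnash : ∀ a b, isNash m11 m21 n11 n12 c1 c2 lam1 lam2 a b ↔ a = nF ∧ b = nF :=
    isPureNash_iff_of_isStrictlyDominant (isStrictlyDominant_nF hd1) (isStrictlyDominant_nF hd2)
  exact ⟨⟨hd1, hd2⟩, (hnash nF nF).2 ⟨rfl, rfl⟩, fun a b => (hnash a b).1⟩
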